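/- arXiv:math/0407506 — 3 statements merged into one kernel-verified Lean document; each statement's English description precedes it below -/
import Mathlib

section
/- Let X be a proper metric space which is cocompact, i.e. there is a compact set C ⊆ X such that for every x ∈ X there is a bijective isometry h : X → X with h(x) ∈ C. Then there exists a natural number m such that every subset S ⊆ X with the property that 1 ≤ d(x,y) < 2 for all distinct x,y ∈ S is finite and has at most m elements. -/
/-- In a cocompact proper metric space there is a uniform bound `m` on the
cardinality of subsets whose points are pairwise at distance in `[1, 2)`. -/
theorem cocompact_proper_bounded_packing (X : Type*) [MetricSpace X] [ProperSpace X]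
    (hcc : ∃ C : Set X, IsCompact C ∧ ∀ x : X, ∃ h : X ≃ᵢ X, h x ∈ C) :
    ∃ m : ℕ, ∀ S : Set X,
      (∀ x ∈ S, ∀ y ∈ S, x ≠ y → 1 ≤ dist x y ∧ dist x y < 2) →
      S.Finite ∧ S.ncard ≤ m := by
  classical
  obtain ⟨C, hC, hcc⟩ := hcc
  -- K : compact 2-thickening of C
  have hK : IsCompact (Metric.cthickening 2 C) := hC.cthickening
  set K := Metric.cthickening 2 C with hKdef
  obtain ⟨t, hts, htfin, htcov⟩ := finite_cover_balls_of_compact hK (by norm_num : (0:ℝ) < 1/2)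
  refine ⟨t.ncard, fun S hS => ?_⟩
  rcases S.eq_empty_or_nonempty with rfl | ⟨x0, hx0⟩
  · simp
  obtain ⟨h, hh⟩ := hcc x0
  -- each h s lies in K
  have hmem : ∀ s ∈ S, h s ∈ K := by
    intro s hs
    rcases eq_or_ne s x0 with rfl | hne
    · exact Metric.self_subset_cthickening _ hh
    · have hd : dist (h s) (h x0) < 2 := by
        rw [h.isometry.dist_eq]
        exact (hS s hs x0 hx0 hne).2
      exact Metric.mem_cthickening_of_dist_le _ _ 2 C hh hd.le
  -- pick for each s a center of a ball containing h s
  have hcen : ∀ s ∈ S, ∃ y, y ∈ t ∧ h s ∈ Metric.ball y (1/2) := by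
    intro s hs
    have := htcov (hmem s hs)
    simpa using this
  let f : X → X := fun x => if hx : ∃ y, y ∈ t ∧ h x ∈ Metric.ball y (1/2) then hx.choose else x
  have hf1 : ∀ s ∈ S, f s ∈ t ∧ h s ∈ Metric.ball (f s) (1/2) := by
    intro s hs
    have hx := hcen s hs
    simp only [f, dif_pos hx]
    exact hx.choose_spec
  have hinj : Set.InjOn f S := by
    intro s1 h1 s2 h2 heq
    by_contra hne
    have hb1 := (hf1 s1 h1).2
    have hb2 := (hf1 s2 h2).2
    rw [heq] at hb1
    have : dist (h s1) (h s2) < 1 := by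
      calc dist (h s1) (h s2) ≤ dist (h s1) (f s2) + dist (h s2) (f s2) :=
            dist_triangle_right _ _ _
        _ < 1/2 + 1/2 := add_lt_add (Metric.mem_ball.1 hb1) (Metric.mem_ball.1 hb2)
        _ = 1 := by norm_num
    rw [h.isometry.dist_eq] at this
    exact absurd (hS s1 h1 s2 h2 hne).1 (not_le.2 this)
  have himg : f '' S ⊆ t := by
    rintro _ ⟨s, hs, rfl⟩
    exact (hf1 s hs).1
  have hSfin : S.Finite := Set.Finite.of_finite_image (htfin.subset himg) hinj
  refine ⟨hSfin, ?_⟩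
  calc S.ncard = (f '' S).ncard := (Set.ncard_image_of_injOn hinj).symm
    _ ≤ t.ncard := Set.ncard_le_ncard himg htfin
end

section
/- Let ℓ² denote the real Hilbert space of square-summable sequences of real numbers, and let Q = {x ∈ ℓ² : |x(n)| ≤ 2^{-n} for all n ∈ ℕ} be the Hilbert cube. Consider the metric space X = ℝ × Q with the product distance. Then: (i) X is a proper metric space, i.e. all closed balls in X are compact; and (ii) X is cocompact, i.e. there is a compact set C ⊆ X such that for every point p ∈ X there is a bijective isometry h : X → X with h(p) ∈ C. Indeed, for each a ∈ ℝ the translation (t,q) ↦ (t+a, q) is a bijective isometry of X, and C = [0,1] × Q is a compact generating domain. -/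
/-- The Hilbert cube: the set of square-summable real sequences `x` with
`|x n| ≤ 2⁻ⁿ` for all `n`. -/
def hilbertCube : Set (lp (fun _ : ℕ => ℝ) 2) :=
  {x | ∀ n : ℕ, |x n| ≤ (2 : ℝ) ^ (-(n : ℤ))}

/-!
The Hilbert cube is compact: on the box `{x | ∀ n, |x n| ≤ 2⁻ⁿ}` convergence in `ℓ²` is the same
as coordinatewise convergence, because `‖x_k - x‖² = ∑ₙ |x_k n - x n|²` is dominated termwise by
the summable `4 · 4⁻ⁿ` (Tannery's theorem), so the box is a continuous image of the product
`∏ₙ [-2⁻ⁿ, 2⁻ⁿ]`, compact by Tychonoff. Hence `ℝ × Q` is proper, and translating the `ℝ` factor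
moves any point into `[0, 1] × Q`.
-/

open Filter Metric
open scoped ENNReal Topology

namespace lp

variable {α : Type*} {E : α → Type*} [∀ i, NormedAddCommGroup (E i)] {p : ℝ≥0∞}

theorem tendsto_of_tendsto_apply_of_norm_le [Fact (1 ≤ p)] (hp : p ≠ ∞) {w : α → ℝ}
    (hw : Memℓp w p) {ι : Type*} {l : Filter ι} {F : ι → lp E p} {f : lp E p}
    (hF : ∀ k i, ‖F k i‖ ≤ w i) (hf : ∀ i, ‖f i‖ ≤ w i)
    (hlim : ∀ i, Tendsto (F · i) l (𝓝 (f i))) : Tendsto F l (𝓝 f) := by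
  have hp₀ : 0 < p.toReal := ENNReal.toReal_pos (zero_lt_one.trans_le Fact.out).ne' hp
  have hdom : Summable fun i => ‖((2 : ℝ) • w) i‖ ^ p.toReal :=
    (hw.const_smul (2 : ℝ)).summable hp₀
  have hdiff (k : ι) (i : α) : ‖F k i - f i‖ ≤ ‖((2 : ℝ) • w) i‖ :=
    calc ‖F k i - f i‖ ≤ ‖F k i‖ + ‖f i‖ := norm_sub_le _ _
      _ ≤ 2 * w i := by linarith [hF k i, hf i]
      _ ≤ ‖((2 : ℝ) • w) i‖ := Real.le_norm_self _
  have hpow : Tendsto (fun k => ‖F k - f‖ ^ p.toReal) l (𝓝 0) := by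
    simp_rw [norm_rpow_eq_tsum hp₀, coeFn_sub, Pi.sub_apply]
    rw [← tsum_zero]
    refine tendsto_tsum_of_dominated_convergence hdom (fun i => ?_) (.of_forall fun k i => ?_)
    · simpa [Real.zero_rpow hp₀.ne'] using
        (tendsto_iff_norm_sub_tendsto_zero.mp (hlim i)).rpow_const (Or.inr hp₀.le)
    · rw [Real.norm_of_nonneg (by positivity)]
      gcongr
      exact hdiff k i
  rw [tendsto_iff_norm_sub_tendsto_zero]
  simpa [Real.zero_rpow (inv_ne_zero hp₀.ne'), Real.rpow_rpow_inv (norm_nonneg _) hp₀.ne'] using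
    hpow.rpow_const (p := p.toReal⁻¹) (Or.inr (inv_nonneg.mpr hp₀.le))

theorem isCompact_setOf_forall_norm_le [Fact (1 ≤ p)] [∀ i, ProperSpace (E i)] (hp : p ≠ ∞)
    {w : α → ℝ} (hw : Memℓp w p) : IsCompact {x : lp E p | ∀ i, ‖x i‖ ≤ w i} := by
  set K : Set (∀ i, E i) := Set.univ.pi fun i => closedBall 0 (w i)
  have hK : IsCompact K := isCompact_univ_pi fun i => isCompact_closedBall 0 (w i)
  have hK_norm (f : K) (i : α) : ‖(f : ∀ i, E i) i‖ ≤ w i :=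
    mem_closedBall_zero_iff.mp (f.2 i trivial)
  let Φ : K → lp E p := fun f => ⟨f.1, hw.mono (hK_norm f)⟩
  have hΦ : Continuous Φ := continuous_iff_continuousAt.2 fun f =>
    tendsto_of_tendsto_apply_of_norm_le hp hw (fun g => hK_norm g) (hK_norm f) fun i =>
      ((continuous_apply i).comp continuous_subtype_val).continuousAt
  have : CompactSpace K := isCompact_iff_compactSpace.mp hK
  convert isCompact_range hΦ
  ext x
  refine ⟨fun hx => ⟨⟨x, fun i _ => mem_closedBall_zero_iff.mpr (hx i)⟩, rfl⟩, ?_⟩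
  rintro ⟨f, rfl⟩
  exact hK_norm f

end lp

theorem memℓp_geometric {p : ℝ≥0∞} (hp : 0 < p.toReal) {r : ℝ} (hr₀ : 0 ≤ r) (hr₁ : r < 1) :
    Memℓp (fun n : ℕ => r ^ n) p := by
  refine memℓp_gen ?_
  simp_rw [Real.norm_eq_abs, abs_pow, abs_of_nonneg hr₀, ← Real.rpow_pow_comm hr₀]
  exact summable_geometric_of_lt_one (by positivity) (Real.rpow_lt_one hr₀ hr₁ hp)

theorem hilbertCube_eq_setOf_norm_le : hilbertCube = {x | ∀ n, ‖x n‖ ≤ (2⁻¹ : ℝ) ^ n} := by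
  ext x
  simp [hilbertCube, Real.norm_eq_abs, zpow_neg, inv_pow]

theorem isCompact_hilbertCube : IsCompact hilbertCube := by
  rw [hilbertCube_eq_setOf_norm_le]
  exact lp.isCompact_setOf_forall_norm_le ENNReal.ofNat_ne_top
    (memℓp_geometric (by norm_num) (by norm_num) (by norm_num))

instance : CompactSpace hilbertCube := isCompact_iff_compactSpace.mp isCompact_hilbertCube

def IsometryEquiv.prodCongr {α β γ δ : Type*} [PseudoEMetricSpace α] [PseudoEMetricSpace β]
    [PseudoEMetricSpace γ] [PseudoEMetricSpace δ] (e₁ : α ≃ᵢ β) (e₂ : γ ≃ᵢ δ) :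
    α × γ ≃ᵢ β × δ where
  toEquiv := e₁.toEquiv.prodCongr e₂.toEquiv
  isometry_toFun := e₁.isometry.prodMap e₂.isometry

/-- `X = ℝ × Q` (Q the Hilbert cube) with the product distance is a proper,
cocompact metric space: every closed ball is compact; for each `a ∈ ℝ` the translation
`(t, q) ↦ (t + a, q)` is a bijective isometry of `X`; and `C = [0,1] × Q` is a compact
generating domain, i.e. every point of `X` is moved into `C` by some bijective isometry. -/
theorem real_prod_hilbertCube_proper_cocompact :
    (∀ (p : ℝ × hilbertCube) (r : ℝ), IsCompact (Metric.closedBall p r)) ∧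
    (∀ a : ℝ, ∃ h : (ℝ × hilbertCube) ≃ᵢ (ℝ × hilbertCube),
        ∀ p : ℝ × hilbertCube, h p = (p.1 + a, p.2)) ∧
    IsCompact ((Set.Icc (0 : ℝ) 1) ×ˢ (Set.univ : Set hilbertCube)) ∧
    (∀ p : ℝ × hilbertCube, ∃ h : (ℝ × hilbertCube) ≃ᵢ (ℝ × hilbertCube),
        h p ∈ (Set.Icc (0 : ℝ) 1) ×ˢ (Set.univ : Set hilbertCube)) := by
  let translate (a : ℝ) : (ℝ × hilbertCube) ≃ᵢ (ℝ × hilbertCube) :=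
    (IsometryEquiv.addRight a).prodCongr (IsometryEquiv.refl _)
  refine ⟨fun p r => isCompact_closedBall p r, fun a => ⟨translate a, fun p => rfl⟩,
    isCompact_Icc.prod isCompact_univ, fun p => ⟨translate (-p.1), ?_, trivial⟩⟩
  change p.1 + -p.1 ∈ Set.Icc (0 : ℝ) 1
  simp
end

section
/- Let X and Y be metric spaces and let f : X → Y and g : Y → X be continuous maps, both uniformly bornologous (i.e. for every r ≥ 0 there is r' ≥ 0 such that points at distance ≤ r are mapped to points at distance ≤ r'). Suppose there are a number s₀ ≥ 0 and a continuous homotopy H : Y × [0,1] → Y with H(y,0) = f(g(y)) and H(y,1) = y for all y ∈ Y, and with d(H(y,t), y) ≤ s₀ for all y ∈ Y and t ∈ [0,1]. If X is uniformly contractible, then Y is uniformly contractible. Here a metric space Z is uniformly contractible if for every r > 0 there is s ≥ r such that for every p ∈ Z there is a continuous map F : B_Z(p,r) × [0,1] → Z with F(z,0) = z for all z, F(·,1) constant, and F(z,t) ∈ B_Z(p,s) for all z and t, where B_Z(p,r) denotes the open ball of radius r about p. -/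
/-- A map between metric spaces is uniformly bornologous if for every `r ≥ 0` there is
`r' ≥ 0` such that points at distance `≤ r` are mapped to points at distance `≤ r'`. -/
def UniformlyBornologous {X Y : Type*} [MetricSpace X] [MetricSpace Y] (f : X → Y) : Prop :=
  ∀ r : ℝ, 0 ≤ r → ∃ r' : ℝ, 0 ≤ r' ∧ ∀ x x' : X, dist x x' ≤ r → dist (f x) (f x') ≤ r'

/-- A metric space `Z` is uniformly contractible if for every `r > 0` there is `s ≥ r`
such that for every `p : Z` the open ball `B(p,r)` contracts to a point inside `B(p,s)`:
there is a continuous `F : B(p,r) × [0,1] → Z` with `F(z,0) = z`, `F(·,1)` constant,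
and all values of `F` in `B(p,s)`. -/
def UniformlyContractible (Z : Type*) [MetricSpace Z] : Prop :=
  ∀ r : ℝ, 0 < r → ∃ s : ℝ, r ≤ s ∧ ∀ p : Z,
    ∃ F : (Metric.ball p r) × unitInterval → Z,
      Continuous F ∧
      (∀ z : Metric.ball p r, F (z, 0) = (z : Z)) ∧
      (∃ c : Z, ∀ z : Metric.ball p r, F (z, 1) = c) ∧
      (∀ (z : Metric.ball p r) (t : unitInterval), F (z, t) ∈ Metric.ball p s)

/-- If `f : X → Y` and `g : Y → X` are continuous, uniformly bornologous maps
and `f ∘ g` is homotopic to `id_Y` through a homotopy moving points at most `s₀`, then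
uniform contractibility of `X` implies uniform contractibility of `Y`. -/
theorem uniformlyContractible_of_bounded_homotopy_equivalence
    {X Y : Type*} [MetricSpace X] [MetricSpace Y]
    (f : X → Y) (g : Y → X) (hf : Continuous f) (hg : Continuous g)
    (hfb : UniformlyBornologous f) (hgb : UniformlyBornologous g)
    (s₀ : ℝ) (hs₀ : 0 ≤ s₀) (H : Y × unitInterval → Y) (hH : Continuous H)
    (hH0 : ∀ y : Y, H (y, 0) = f (g y)) (hH1 : ∀ y : Y, H (y, 1) = y)
    (hHbd : ∀ (y : Y) (t : unitInterval), dist (H (y, t)) y ≤ s₀)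
    (hX : UniformlyContractible X) :
    UniformlyContractible Y := by
  intro r hr
  -- g maps B(p,r) into B(g p, r'+1)
  obtain ⟨r', hr'0, hr'⟩ := hgb r hr.le
  obtain ⟨s₁, hs₁, hF⟩ := hX (r' + 1) (by linarith)
  obtain ⟨r₂, hr₂0, hr₂⟩ := hfb s₁ (by linarith)
  refine ⟨max (r + s₀ + 1) (r₂ + s₀ + 1), le_trans (by linarith) (le_max_left _ _), ?_⟩
  intro p
  obtain ⟨FX, hFXc, hFX0, ⟨c, hFXc1⟩, hFXbd⟩ := hF (g p)
  -- the inclusion of g-images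
  have hσ : ∀ z : Metric.ball p r, g (z : Y) ∈ Metric.ball (g p) (r' + 1) := by
    intro z
    have := hr' (z : Y) p (le_of_lt (Metric.mem_ball.mp z.2))
    simp only [Metric.mem_ball]
    calc dist (g (z : Y)) (g p) ≤ r' := this
      _ < r' + 1 := by linarith
  set σ : Metric.ball p r → Metric.ball (g p) (r' + 1) := fun z => ⟨g z, hσ z⟩ with hσdef
  have hσcont : Continuous σ := Continuous.subtype_mk (hg.comp continuous_subtype_val) _
  -- clamping maps
  set a : unitInterval → unitInterval := fun t => Set.projIcc 0 1 zero_le_one (1 - 2 * (t : ℝ)) with ha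
  set b : unitInterval → unitInterval := fun t => Set.projIcc 0 1 zero_le_one (2 * (t : ℝ) - 1) with hb
  have hacont : Continuous a := continuous_projIcc.comp
    (continuous_const.sub (continuous_const.mul continuous_subtype_val))
  have hbcont : Continuous b := continuous_projIcc.comp
    ((continuous_const.mul continuous_subtype_val).sub continuous_const)
  have ha0 : a 0 = 1 := by
    have : (1 - 2 * ((0 : unitInterval) : ℝ)) = 1 := by norm_num
    rw [ha]; simp only [this]
    exact Subtype.ext (by rw [Set.projIcc_of_mem zero_le_one (by norm_num : (1:ℝ) ∈ Set.Icc 0 1)]; norm_num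
    )
  have hahalf : ∀ t : unitInterval, (t : ℝ) = 1/2 → a t = 0 := by
    intro t ht
    rw [ha]; simp only [ht]
    exact Subtype.ext (by rw [show (1 - 2 * (1/2 : ℝ)) = 0 by norm_num,
      Set.projIcc_of_mem zero_le_one (by norm_num : (0:ℝ) ∈ Set.Icc 0 1)]; norm_num)
  have hbhalf : ∀ t : unitInterval, (t : ℝ) = 1/2 → b t = 0 := by
    intro t ht
    rw [hb]; simp only [ht]
    exact Subtype.ext (by rw [show (2 * (1/2 : ℝ) - 1) = 0 by norm_num,
      Set.projIcc_of_mem zero_le_one (by norm_num : (0:ℝ) ∈ Set.Icc 0 1)]; norm_num)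
  have hb1 : b 1 = 1 := by
    apply Subtype.ext
    show (Set.projIcc 0 1 zero_le_one (2 * ((1:unitInterval) : ℝ) - 1) : ℝ) = _
    rw [show (2 * ((1:unitInterval) : ℝ) - 1) = 1 by norm_num,
      Set.projIcc_of_mem zero_le_one (by norm_num : (1:ℝ) ∈ Set.Icc 0 1)]; norm_num
  -- the homotopy
  refine ⟨fun w => if (w.2 : ℝ) ≤ 1/2 then H ((w.1 : Y), a w.2) else f (FX (σ w.1, b w.2)),
    ?_, ?_, ⟨f c, ?_⟩, ?_⟩
  · apply Continuous.if_le
    · exact hH.comp ((continuous_subtype_val.comp continuous_fst).prodMk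
        (hacont.comp continuous_snd))
    · exact hf.comp (hFXc.comp ((hσcont.comp continuous_fst).prodMk
        (hbcont.comp continuous_snd)))
    · exact continuous_subtype_val.comp continuous_snd
    · exact continuous_const
    · intro w hw
      rw [hahalf _ hw, hbhalf _ hw, hH0, hFX0]
  · intro z
    have h0 : ((0 : unitInterval) : ℝ) ≤ 1/2 := by norm_num
    simp only [h0, if_true, ha0, hH1]
  · intro z
    have h1 : ¬ ((1 : unitInterval) : ℝ) ≤ 1/2 := by norm_num
    simp only [h1, if_false, hb1, hFXc1]
  · intro z t
    have hzp : dist (z : Y) p < r := Metric.mem_ball.mp z.2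
    by_cases ht : (t : ℝ) ≤ 1/2
    · simp only [ht, if_true, Metric.mem_ball]
      calc dist (H ((z : Y), a t)) p ≤ dist (H ((z : Y), a t)) (z : Y) + dist (z : Y) p :=
            dist_triangle _ _ _
        _ ≤ s₀ + r := add_le_add (hHbd _ _) hzp.le
        _ < r + s₀ + 1 := by linarith
        _ ≤ max (r + s₀ + 1) (r₂ + s₀ + 1) := le_max_left _ _
    · simp only [ht, if_false, Metric.mem_ball]
      have h1 : dist (FX (σ z, b t)) (g p) < s₁ := by
        exact Metric.mem_ball.mp (hFXbd (σ z) (b t))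
      have h2 : dist (f (FX (σ z, b t))) (f (g p)) ≤ r₂ := hr₂ _ _ h1.le
      have h3 : dist (f (g p)) p ≤ s₀ := by
        have := hHbd p 0
        rwa [hH0] at this
      calc dist (f (FX (σ z, b t))) p
          ≤ dist (f (FX (σ z, b t))) (f (g p)) + dist (f (g p)) p := dist_triangle _ _ _
        _ ≤ r₂ + s₀ := add_le_add h2 h3
        _ < r₂ + s₀ + 1 := by linarith
        _ ≤ max (r + s₀ + 1) (r₂ + s₀ + 1) := le_max_right _ _
end
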